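/- arXiv:2312.05663 — 5 statements merged into one kernel-verified Lean document; each statement's English description precedes it below -/
import Mathlib

section
/- If (X, f, R) is a virtual biquandle (i.e., R: X × X → X × X is an invertible Yang-Baxter operator and f: X → X is a bijection commuting with R in the sense that (f × f) ∘ R = R ∘ (f × f)), then the operator VR: X × X → X × X defined by VR(x,y) = (R₁(x, f(y)), R₂(f⁻¹(x), y)) satisfies the set-theoretic Yang-Baxter equation (VR × id)(id × VR)(VR × id) = (id × VR)(VR × id)(id × VR). -/
/-- `S × id` on triples. -/
def sId {X : Type*} (S : X × X → X × X) : X × X × X → X × X × X :=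
  fun p => ((S (p.1, p.2.1)).1, (S (p.1, p.2.1)).2, p.2.2)

/-- `id × S` on triples. -/
def idS {X : Type*} (S : X × X → X × X) : X × X × X → X × X × X :=
  fun p => (p.1, S p.2)

/-- The set-theoretic Yang-Baxter equation. -/
def YangBaxter {X : Type*} (S : X × X → X × X) : Prop :=
  sId S ∘ idS S ∘ sId S = idS S ∘ sId S ∘ idS S

/-- If `(X, f, R)` is a virtual biquandle (R an invertible Yang-Baxter operator, f a
bijection with `(f × f) ∘ R = R ∘ (f × f)`), then
`VR(x,y) = (R₁(x, f y), R₂(f⁻¹ x, y))` satisfies the Yang-Baxter equation. -/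
theorem stmt0 {X : Type*} (R : X × X ≃ X × X) (f : X ≃ X)
    (hYB : YangBaxter (R : X × X → X × X))
    (hcomm : ∀ x y : X, R (f x, f y) = (f (R (x, y)).1, f (R (x, y)).2)) :
    YangBaxter (fun p : X × X => ((R (p.1, f p.2)).1, (R (f.symm p.1, p.2)).2)) := by
  have hYB' : ∀ t : X × X × X, sId (R : X × X → X × X) (idS R (sId R t))
      = idS (R : X × X → X × X) (sId R (idS R t)) := fun t => congrFun hYB t
  unfold YangBaxter
  funext p
  obtain ⟨x, y, z⟩ := p
  obtain ⟨x, rfl⟩ := f.surjective x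
  obtain ⟨z, rfl⟩ := f.symm.surjective z
  have hsymm : ∀ a b : X, R (f.symm a, f.symm b)
      = (f.symm (R (a, b)).1, f.symm (R (a, b)).2) := by
    intro a b
    have h := hcomm (f.symm a) (f.symm b)
    simp only [Equiv.apply_symm_apply] at h
    rw [h]
    simp
  have key := hYB' (x, y, z)
  simp only [sId, idS, Function.comp_apply, hcomm, hsymm, Equiv.symm_apply_apply,
    Equiv.apply_symm_apply] at key ⊢
  rw [Prod.ext_iff, Prod.ext_iff] at key ⊢
  exact ⟨congrArg f key.1, key.2.1, congrArg f.symm key.2.2⟩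
end

section
/- Let G be a group and define R: G × G → G × G by R(x,y) = (x⁻¹ y⁻¹ x, y² x). Then R satisfies the set-theoretic Yang-Baxter equation. -/
/-- The Wada map `R(x,y) = (x⁻¹ y⁻¹ x, y² x)` satisfies the Yang-Baxter equation. -/
theorem stmt3 {G : Type*} [Group G] :
    YangBaxter (fun p : G × G => (p.1⁻¹ * p.2⁻¹ * p.1, p.2 ^ 2 * p.1)) := by
  funext ⟨x, y, z⟩
  simp only [YangBaxter, sId, idS, Function.comp, Prod.mk.injEq]
  refine ⟨?_, ?_, ?_⟩ <;> simp only [pow_two, mul_assoc] <;> group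
end

section
/- Let k be a commutative ring with units α, β satisfying (1−α)(1−β) = 0, and define R: k × k → k × k by R(x,y) = ((1−α)x + αy, βx + (1−β)y). Then R satisfies the set-theoretic Yang-Baxter equation. -/
/-- The linear map `R(x,y) = ((1−α)x + αy, βx + (1−β)y)` with `α, β` units and
`(1−α)(1−β) = 0` satisfies the Yang-Baxter equation. -/
theorem stmt9 {k : Type*} [CommRing k] (α β : kˣ)
    (h : (1 - (α : k)) * (1 - (β : k)) = 0) :
    YangBaxter (fun p : k × k =>
      ((1 - (α : k)) * p.1 + (α : k) * p.2, (β : k) * p.1 + (1 - (β : k)) * p.2)) := by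
  funext p
  obtain ⟨x, y, z⟩ := p
  simp only [YangBaxter, sId, idS, Function.comp_apply]
  refine Prod.ext ?_ (Prod.ext ?_ ?_) <;> simp only
  · linear_combination ((α : k) * y - (α : k) * x) * h
  · linear_combination ((β : k) * x - (β : k) * y + (α : k) * y - (α : k) * z) * h
  · linear_combination ((β : k) * z - (β : k) * y) * h
end

section
/- Let f be a bijection of a set X, and for 1 ≤ i ≤ n−1 let φ(ρᵢ): Xⁿ → Xⁿ send xᵢ ↦ f⁻¹(x_{i+1}), x_{i+1} ↦ f(xᵢ), fixing other coordinates. With θ = f^{n-1} × ⋯ × f × id, the conjugate θ ∘ φ(ρᵢ) ∘ θ⁻¹ is the transposition swapping the i-th and (i+1)-th coordinates. -/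
/-- The action of the virtual generator `ρᵢ` on `Xⁿ`:
`xᵢ ↦ f⁻¹ x_{i+1}`, `x_{i+1} ↦ f xᵢ`. -/
def phiRho {X : Type*} (f : X ≃ X) {n : ℕ} (i : ℕ) (hi : i + 1 < n) :
    (Fin n → X) → (Fin n → X) :=
  fun v j =>
    if j = (⟨i, Nat.lt_of_succ_lt hi⟩ : Fin n) then f.symm (v ⟨i + 1, hi⟩)
    else if j = (⟨i + 1, hi⟩ : Fin n) then f (v ⟨i, Nat.lt_of_succ_lt hi⟩)
    else v j

/-- `θ = f^{n-1} × ⋯ × f × id`. -/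
def theta {X : Type*} (f : X ≃ X) (n : ℕ) : (Fin n → X) → (Fin n → X) :=
  fun v i => (⇑f)^[n - 1 - (i : ℕ)] (v i)

/-- Inverse of `θ`. -/
def thetaInv {X : Type*} (f : X ≃ X) (n : ℕ) : (Fin n → X) → (Fin n → X) :=
  fun v i => (⇑f.symm)^[n - 1 - (i : ℕ)] (v i)

lemma cancel_iter {X : Type*} (f : X ≃ X) (k : ℕ) (x : X) :
    (⇑f)^[k] ((⇑f.symm)^[k] x) = x :=
  (Function.LeftInverse.iterate f.apply_symm_apply k) x

/-- The conjugate `θ ∘ φ(ρᵢ) ∘ θ⁻¹` is the transposition of the `i`-th and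
`(i+1)`-th coordinates. -/
theorem stmt15 {X : Type*} (f : X ≃ X) (n : ℕ) (i : ℕ) (hi : i + 1 < n) :
    theta f n ∘ phiRho f i hi ∘ thetaInv f n =
      fun v j =>
        if j = (⟨i, Nat.lt_of_succ_lt hi⟩ : Fin n) then v ⟨i + 1, hi⟩
        else if j = (⟨i + 1, hi⟩ : Fin n) then v ⟨i, Nat.lt_of_succ_lt hi⟩
        else v j := by
  funext v j
  simp only [Function.comp_apply, theta, phiRho, thetaInv]
  have hkey : n - 1 - i = (n - 1 - (i + 1)) + 1 := by omega
  split_ifs with h1 h2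
  · subst h1
    simp only
    rw [hkey, Function.iterate_succ_apply, Equiv.apply_symm_apply]
    exact cancel_iter f _ _
  · subst h2
    simp only
    rw [hkey, Function.iterate_succ_apply', Equiv.apply_symm_apply]
    exact cancel_iter f _ _
  · exact cancel_iter f _ _
end

section
/- Let f be a bijection of X commuting with Yang-Baxter operator R, and let φ(σᵢ), φ(ρᵢ) be as in the virtual biquandle action on Xⁿ. Then the forbidden-move-allowed relation φ(σᵢ)φ(ρⱼ) = φ(ρⱼ)φ(σᵢ) holds for |i−j| ≥ 2; consequently the assignments σᵢ ↦ φ(σᵢ), ρᵢ ↦ φ(ρᵢ) satisfy all defining relations of the virtual braid group VBₙ, yielding a group homomorphism VBₙ → Sym(Xⁿ). -/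
/-- The action of the classical braid generator `σᵢ` on `Xⁿ`, as a permutation. -/
noncomputable def phiSigma {X : Type*} (R : X × X ≃ X × X) {n : ℕ} (i : ℕ)
    (hi : i + 1 < n) : (Fin n → X) → (Fin n → X) :=
  fun v j =>
    if j = (⟨i, Nat.lt_of_succ_lt hi⟩ : Fin n) then
      (R (v ⟨i, Nat.lt_of_succ_lt hi⟩, v ⟨i + 1, hi⟩)).1
    else if j = (⟨i + 1, hi⟩ : Fin n) then
      (R (v ⟨i, Nat.lt_of_succ_lt hi⟩, v ⟨i + 1, hi⟩)).2
    else v j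

/-- Generators of the virtual braid group `VBₙ`: `Sum.inl i = σᵢ`, `Sum.inr i = ρᵢ`,
for `i` ranging over `Fin (n-1)`. -/
abbrev VBGen (n : ℕ) := Fin (n - 1) ⊕ Fin (n - 1)

/-- The defining relations of the virtual braid group `VBₙ` (as elements of the
free group that are set equal to `1`). -/
def vbRels (n : ℕ) : Set (FreeGroup (VBGen n)) :=
  let s : Fin (n - 1) → FreeGroup (VBGen n) := fun i => FreeGroup.of (Sum.inl i)
  let t : Fin (n - 1) → FreeGroup (VBGen n) := fun i => FreeGroup.of (Sum.inr i)
  (⋃ (i : Fin (n - 1)) (j : Fin (n - 1)) (_ : (i : ℕ) + 1 = (j : ℕ)),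
    ({s i * s j * s i * (s j * s i * s j)⁻¹,
      t i * t j * t i * (t j * t i * t j)⁻¹,
      t i * t j * s i * (s j * t i * t j)⁻¹} : Set (FreeGroup (VBGen n)))) ∪
  (⋃ (i : Fin (n - 1)) (j : Fin (n - 1)) (_ : (i : ℕ) + 2 ≤ (j : ℕ)),
    ({s i * s j * (s j * s i)⁻¹,
      t i * t j * (t j * t i)⁻¹,
      s i * t j * (t j * s i)⁻¹,
      t i * s j * (s j * t i)⁻¹} : Set (FreeGroup (VBGen n)))) ∪
  (⋃ i : Fin (n - 1), ({t i * t i} : Set (FreeGroup (VBGen n))))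

/-- The virtual braid group `VBₙ` as a presented group. -/
def VB (n : ℕ) := PresentedGroup (vbRels n)

instance (n : ℕ) : Group (VB n) := by unfold VB; infer_instance

/-- For `i : Fin (n-1)` we have `i + 1 < n`. -/
theorem vb_index_lt {n : ℕ} (i : Fin (n - 1)) : (i : ℕ) + 1 < n := by
  have := i.isLt; omega

section Aux

set_option maxHeartbeats 2000000

variable {X : Type*} {n : ℕ}

/-- A map on `Xⁿ` acting by `g` on coordinates `i, i+1`. -/
def local2 (g : X × X → X × X) (i : ℕ) (hi : i + 1 < n) : (Fin n → X) → (Fin n → X) :=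
  fun v j =>
    if j = (⟨i, Nat.lt_of_succ_lt hi⟩ : Fin n) then
      (g (v ⟨i, Nat.lt_of_succ_lt hi⟩, v ⟨i + 1, hi⟩)).1
    else if j = (⟨i + 1, hi⟩ : Fin n) then
      (g (v ⟨i, Nat.lt_of_succ_lt hi⟩, v ⟨i + 1, hi⟩)).2
    else v j

lemma phiSigma_eq_local2 (R : X × X ≃ X × X) (i : ℕ) (hi : i + 1 < n) :
    phiSigma (n := n) R i hi = local2 (⇑R) i hi := rfl

/-- The "virtual swap" `(a,b) ↦ (f⁻¹ b, f a)` as an equivalence (it is an involution). -/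
def twist (f : X ≃ X) : X × X ≃ X × X where
  toFun p := (f.symm p.2, f p.1)
  invFun p := (f.symm p.2, f p.1)
  left_inv p := by simp
  right_inv p := by simp

lemma phiRho_eq_local2 (f : X ≃ X) (i : ℕ) (hi : i + 1 < n) :
    phiRho (n := n) f i hi = local2 (⇑(twist f)) i hi := rfl

lemma local2_comp (g g' : X × X → X × X) (i : ℕ) (hi : i + 1 < n) :
    local2 g i hi ∘ local2 g' i hi = local2 (g ∘ g') i hi := by
  funext v j
  obtain ⟨m, hm⟩ := j
  simp only [Function.comp_apply, local2, Fin.mk.injEq]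
  split_ifs <;> first | rfl | omega

lemma local2_id (i : ℕ) (hi : i + 1 < n) :
    local2 (id : X × X → X × X) i hi = id := by
  funext v j
  obtain ⟨m, hm⟩ := j
  simp only [local2, Fin.mk.injEq, id]
  split_ifs with h1 h2
  · subst h1; rfl
  · subst h2; rfl
  · rfl

lemma local2_far (g h : X × X → X × X) (i j : ℕ) (hi : i + 1 < n) (hj : j + 1 < n)
    (hij : i + 2 ≤ j) :
    local2 g i hi ∘ local2 h j hj = local2 h j hj ∘ local2 g i hi := by
  funext v k
  obtain ⟨m, hm⟩ := k
  simp only [Function.comp_apply, local2, Fin.mk.injEq]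
  split_ifs <;> first | omega | rfl

lemma local2_braid (g h k g' h' k' : X × X → X × X) (i : ℕ)
    (h1 : i + 1 < n) (h2 : i + 1 + 1 < n)
    (hfun : sId g ∘ idS h ∘ sId k = idS g' ∘ sId h' ∘ idS k') :
    local2 g i h1 ∘ local2 h (i+1) h2 ∘ local2 k i h1
      = local2 g' (i+1) h2 ∘ local2 h' i h1 ∘ local2 k' (i+1) h2 := by
  funext v j
  have H := congrFun hfun (v ⟨i, by omega⟩, v ⟨i+1, by omega⟩, v ⟨i+1+1, h2⟩)
  simp only [Function.comp_apply, sId, idS, Prod.ext_iff] at H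
  obtain ⟨H1, H2, H3⟩ := H
  obtain ⟨m, hm⟩ := j
  simp only [Function.comp_apply, local2, Fin.mk.injEq]
  split_ifs <;> first | omega | exact H1 | exact H2 | exact H3 | rfl

/-- `local2` of an equivalence, as a permutation of `Xⁿ`. -/
noncomputable def local2Perm (g : X × X ≃ X × X) (i : ℕ) (hi : i + 1 < n) :
    Equiv.Perm (Fin n → X) where
  toFun := local2 (⇑g) i hi
  invFun := local2 (⇑g.symm) i hi
  left_inv v := by
    have h := congrFun (local2_comp (⇑g.symm) (⇑g) i hi) v
    simp only [Function.comp_apply] at h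
    rw [h]
    have : (⇑g.symm ∘ ⇑g) = (id : X × X → X × X) := g.symm_comp_self
    rw [this, local2_id]; rfl
  right_inv v := by
    have h := congrFun (local2_comp (⇑g) (⇑g.symm) i hi) v
    simp only [Function.comp_apply] at h
    rw [h]
    have : (⇑g ∘ ⇑g.symm) = (id : X × X → X × X) := g.self_comp_symm
    rw [this, local2_id]; rfl

lemma local2Perm_coe (g : X × X ≃ X × X) (i : ℕ) (hi : i + 1 < n) :
    ⇑(local2Perm g i hi) = local2 (⇑g) i hi := rfl

lemma perm_mul3_eq {α : Type*} (p q r p' q' r' : Equiv.Perm α)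
    (h : ⇑p ∘ ⇑q ∘ ⇑r = ⇑p' ∘ ⇑q' ∘ ⇑r') : p * q * r = p' * q' * r' := by
  ext v
  have := congrFun h v
  simpa using this

lemma perm_mul2_eq {α : Type*} (p q p' q' : Equiv.Perm α)
    (h : ⇑p ∘ ⇑q = ⇑p' ∘ ⇑q') : p * q = p' * q' := by
  ext v
  have := congrFun h v
  simpa using this

end Aux

set_option maxHeartbeats 2000000 in
/-- Far commutativity `φ(σᵢ)φ(ρⱼ) = φ(ρⱼ)φ(σᵢ)` for `|i − j| ≥ 2`, and the assignment
`σᵢ ↦ φ(σᵢ)`, `ρᵢ ↦ φ(ρᵢ)` extends to a group homomorphism `VBₙ → Sym(Xⁿ)`. -/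
theorem stmt19 {X : Type*} (n : ℕ) (R : X × X ≃ X × X) (f : X ≃ X)
    (hYB : YangBaxter (R : X × X → X × X))
    (hcomm : ∀ x y : X, R (f x, f y) = (f (R (x, y)).1, f (R (x, y)).2)) :
    (∀ (i j : ℕ) (hi : i + 1 < n) (hj : j + 1 < n), i + 2 ≤ j ∨ j + 2 ≤ i →
      phiSigma R i hi ∘ phiRho f j hj = phiRho f j hj ∘ phiSigma R i hi) ∧
    ∃ Φ : VB n →* Equiv.Perm (Fin n → X),
      ∀ i : Fin (n - 1),
        ⇑(Φ (PresentedGroup.of (Sum.inl i))) = phiSigma R (i : ℕ) (vb_index_lt i) ∧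
        ⇑(Φ (PresentedGroup.of (Sum.inr i))) = phiRho f (i : ℕ) (vb_index_lt i) := by
  -- triple-function identities
  have hRho3 : sId (⇑(twist f)) ∘ idS (⇑(twist f)) ∘ sId (⇑(twist f))
      = idS (⇑(twist f)) ∘ sId (⇑(twist f)) ∘ idS (⇑(twist f)) := by
    funext p
    obtain ⟨a, b, c⟩ := p
    simp [sId, idS, twist]
  have hMix3 : sId (⇑(twist f)) ∘ idS (⇑(twist f)) ∘ sId (⇑R)
      = idS (⇑R) ∘ sId (⇑(twist f)) ∘ idS (⇑(twist f)) := by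
    funext p
    obtain ⟨a, b, c⟩ := p
    simp only [Function.comp_apply, sId, idS, twist, Equiv.coe_fn_mk]
    rw [hcomm]
  constructor
  · intro i j hi hj hdisj
    rw [phiSigma_eq_local2, phiRho_eq_local2]
    rcases hdisj with hd | hd
    · exact local2_far _ _ i j hi hj hd
    · exact (local2_far _ _ j i hj hi hd).symm
  · -- the assignment on generators
    set F : VBGen n → Equiv.Perm (Fin n → X) :=
      Sum.elim (fun i => local2Perm R (i : ℕ) (vb_index_lt i))
        (fun i => local2Perm (twist f) (i : ℕ) (vb_index_lt i)) with hF
    have hrel : ∀ r ∈ vbRels n, FreeGroup.lift F r = 1 := by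
      intro r hr
      unfold vbRels at hr
      simp only [Set.mem_union, Set.mem_iUnion, Set.mem_insert_iff,
        Set.mem_singleton_iff] at hr
      rcases hr with (⟨i, j, hij, hr⟩ | ⟨i, j, hij, hr⟩) | ⟨i, hr⟩
      · -- braid-type relations, j = i + 1
        obtain ⟨jv, hjlt⟩ := j
        simp only [Fin.val_mk] at hij
        subst hij
        have h1 : (i : ℕ) + 1 < n := vb_index_lt i
        have h2 : (i : ℕ) + 1 + 1 < n := vb_index_lt ⟨(i : ℕ) + 1, hjlt⟩
        rcases hr with hr | hr | hr <;>
          subst hr <;>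
          simp only [map_mul, map_inv, FreeGroup.lift_apply_of, hF, Sum.elim_inl,
            Sum.elim_inr, mul_inv_eq_one] <;>
          apply perm_mul3_eq
        · -- σ braid
          simp only [local2Perm_coe]
          exact local2_braid _ _ _ _ _ _ (i : ℕ) h1 h2 hYB
        · -- ρ braid
          simp only [local2Perm_coe]
          exact local2_braid _ _ _ _ _ _ (i : ℕ) h1 h2 hRho3
        · -- mixed braid
          simp only [local2Perm_coe]
          exact local2_braid _ _ _ _ _ _ (i : ℕ) h1 h2 hMix3
      · -- far commutativity relations
        have h1 : (i : ℕ) + 1 < n := vb_index_lt i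
        have h2 : (j : ℕ) + 1 < n := vb_index_lt j
        rcases hr with hr | hr | hr | hr <;>
          subst hr <;>
          simp only [map_mul, map_inv, FreeGroup.lift_apply_of, hF, Sum.elim_inl,
            Sum.elim_inr, mul_inv_eq_one] <;>
          apply perm_mul2_eq <;>
          simp only [local2Perm_coe] <;>
          exact local2_far _ _ (i : ℕ) (j : ℕ) h1 h2 hij
      · -- ρᵢ² = 1
        subst hr
        simp only [map_mul, FreeGroup.lift_apply_of, hF, Sum.elim_inr]
        ext v
        simp only [Equiv.Perm.coe_mul, Function.comp_apply, Equiv.Perm.coe_one, id_eq,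
          local2Perm_coe]
        have h := congrFun (local2_comp (⇑(twist f)) (⇑(twist f)) (i : ℕ) (vb_index_lt i)) v
        simp only [Function.comp_apply] at h
        rw [h]
        have ht : (⇑(twist f) ∘ ⇑(twist f)) = (id : X × X → X × X) := by
          funext p; simp [twist]
        rw [ht, local2_id]; rfl
    refine ⟨PresentedGroup.toGroup hrel, fun i => ⟨?_, ?_⟩⟩
    · show ⇑(PresentedGroup.toGroup hrel (PresentedGroup.of (Sum.inl i)))
        = phiSigma R (i : ℕ) (vb_index_lt i)
      rw [PresentedGroup.toGroup.of]
      rfl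
    · show ⇑(PresentedGroup.toGroup hrel (PresentedGroup.of (Sum.inr i)))
        = phiRho f (i : ℕ) (vb_index_lt i)
      rw [PresentedGroup.toGroup.of]
      rfl
end
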